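/- arXiv:2502.10136 — 3 statements merged into one kernel-verified Lean document; each statement's English description precedes it below -/
import Mathlib

section
/- For any even cycle C_n (n ≥ 4 even), rc(C_n) = n/2 − 1. -/
open SimpleGraph

/-- The cop's sequence of positions, given his initial vertex `c₀` and a
(history-dependent) strategy `F`, where `F n` determines the cop's `(n+1)`-st
position from the robber's positions `r 0, …, r n` seen so far. -/
def copSeq {V : Type*} (c₀ : V) (F : (n : ℕ) → (Fin (n + 1) → V) → V)
    (r : ℕ → V) : ℕ → V
  | 0 => c₀
  | n + 1 => F n (fun i : Fin (n + 1) => r i)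

/-- The cop has a winning strategy in the cop and robber game with radius of
capture `k` on the graph `G`: the cop chooses a starting vertex and a strategy
such that, against every legal play of the robber (at each step the robber
stays or moves to an adjacent vertex; his moves may depend on the whole
history), the cop's play is legal and at some point of the game the distance
between the two players is at most `k`. -/
def CopWinRC {V : Type*} (G : SimpleGraph V) (k : ℕ) : Prop :=
  ∃ (c₀ : V) (F : (n : ℕ) → (Fin (n + 1) → V) → V),
    ∀ r : ℕ → V,
      (∀ i, r (i + 1) = r i ∨ G.Adj (r i) (r (i + 1))) →
      ((∀ n, copSeq c₀ F r (n + 1) = copSeq c₀ F r n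
            ∨ G.Adj (copSeq c₀ F r n) (copSeq c₀ F r (n + 1))) ∧
        ∃ n, G.dist (copSeq c₀ F r n) (r n) ≤ k
           ∨ G.dist (copSeq c₀ F r (n + 1)) (r n) ≤ k)

/-- The radius capture number of `G`: the least `k` such that the cop wins
the cop and robber game with radius of capture `k`. -/
noncomputable def rcNum {V : Type*} (G : SimpleGraph V) : ℕ :=
  sInf {k | CopWinRC G k}

/-- Eccentricity of a vertex: the maximum distance to another vertex. -/
noncomputable def graphEcc {V : Type*} (G : SimpleGraph V) (v : V) : ℕ :=
  sSup (Set.range (G.dist v))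

/-- Radius of a graph: the minimum eccentricity. -/
noncomputable def graphRad {V : Type*} (G : SimpleGraph V) : ℕ :=
  sInf (Set.range (graphEcc G))

/-!
Every vertex of `C_n` has eccentricity `n/2`, so a cop who takes one step toward the robber's
starting vertex is within `n/2 - 1` of him. Conversely, rotation by `n/2` is an automorphism
moving every vertex to distance `n/2`. A robber who always stands at the image of the cop under
this rotation is at distance `n/2` from him after each of his own moves, hence at distance at
least `n/2 - 1` after each move of the cop, so a radius of capture `n/2 - 2` never suffices.
-/

open SimpleGraph

section Game

variable {V : Type*} {G : SimpleGraph V} {k : ℕ}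

theorem SimpleGraph.exists_eq_or_adj_dist_le {u v : V} (h : G.dist u v ≤ k + 1) :
    ∃ w, (w = u ∨ G.Adj u w) ∧ G.dist w v ≤ k := by
  rcases Nat.lt_or_ge (G.dist u v) (k + 1) with hlt | hge
  · exact ⟨u, Or.inl rfl, by omega⟩
  obtain ⟨p, hp⟩ := exists_walk_of_dist_ne_zero (G := G) (u := u) (v := v) (by omega)
  cases p with
  | nil => simp at hge
  | cons hadj q =>
    have := dist_le q
    rw [Walk.length_cons] at hp
    exact ⟨_, Or.inr hadj, by omega⟩

theorem copWinRC_of_forall_dist_le (c₀ : V) (hc₀ : ∀ v, G.dist c₀ v ≤ k + 1) :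
    CopWinRC G k := by
  choose step hstep hdist using fun v => exists_eq_or_adj_dist_le (hc₀ v)
  refine ⟨c₀, fun _ hist => step (hist 0), fun r _ => ⟨fun m => ?_, 0, Or.inr (hdist (r 0))⟩⟩
  cases m with
  | zero => exact hstep (r 0)
  | succ m => exact Or.inl rfl

section Mirror

open Classical in
/-- The robber follows the image of the cop under `σ`, staying put when that would be an illegal
move, which only happens if the cop himself moves illegally. -/
noncomputable def mirrorRobber (σ : G →g G) (c₀ : V) (F : (i : ℕ) → (Fin (i + 1) → V) → V) :
    ℕ → V
  | 0 => σ c₀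
  | i + 1 =>
    let target := σ (F i fun j => mirrorRobber σ c₀ F j)
    if target = mirrorRobber σ c₀ F i ∨ G.Adj (mirrorRobber σ c₀ F i) target then target
    else mirrorRobber σ c₀ F i

variable (σ : G →g G) (c₀ : V) (F : (i : ℕ) → (Fin (i + 1) → V) → V)

theorem mirrorRobber_succ_eq_or_adj (i : ℕ) :
    mirrorRobber σ c₀ F (i + 1) = mirrorRobber σ c₀ F i ∨
      G.Adj (mirrorRobber σ c₀ F i) (mirrorRobber σ c₀ F (i + 1)) := by
  rw [mirrorRobber]
  split_ifs with h
  exacts [h, Or.inl rfl]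

theorem mirrorRobber_eq_map_copSeq
    (hcop : ∀ i, copSeq c₀ F (mirrorRobber σ c₀ F) (i + 1) = copSeq c₀ F (mirrorRobber σ c₀ F) i ∨
      G.Adj (copSeq c₀ F (mirrorRobber σ c₀ F) i) (copSeq c₀ F (mirrorRobber σ c₀ F) (i + 1)))
    (i : ℕ) : mirrorRobber σ c₀ F i = σ (copSeq c₀ F (mirrorRobber σ c₀ F) i) := by
  induction i with
  | zero => rw [mirrorRobber]; rfl
  | succ i ih =>
    rw [mirrorRobber, if_pos]
    · rfl
    rw [ih]
    rcases hcop i with h | h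
    · exact Or.inl (congrArg σ h)
    · exact Or.inr (σ.map_adj h)

end Mirror

theorem not_copWinRC_of_forall_add_two_le_dist_map (σ : G →g G)
    (hσ : ∀ v, k + 2 ≤ G.dist v (σ v)) : ¬ CopWinRC G k := by
  rintro ⟨c₀, F, hF⟩
  obtain ⟨hcop, i, hcap⟩ := hF _ (mirrorRobber_succ_eq_or_adj σ c₀ F)
  rw [mirrorRobber_eq_map_copSeq σ c₀ F hcop i] at hcap
  set c := copSeq c₀ F (mirrorRobber σ c₀ F)
  have hfar := hσ (c i)
  have hstep : G.Reachable (c i) (c (i + 1)) ∧ G.dist (c i) (c (i + 1)) ≤ 1 := by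
    rcases hcop i with h | h
    · simp [h]
    · exact ⟨h.reachable, (dist_eq_one_iff_adj.mpr h).le⟩
  have := hstep.1.dist_triangle_left (σ (c i))
  omega

theorem rcNum_eq_of_forall_dist_le_of_forall_le_dist_map (c₀ : V) (σ : G →g G)
    (hc₀ : ∀ v, G.dist c₀ v ≤ k + 1) (hσ : ∀ v, k + 1 ≤ G.dist v (σ v)) : rcNum G = k := by
  have hwin := copWinRC_of_forall_dist_le c₀ hc₀
  refine le_antisymm (Nat.sInf_le hwin) (le_csInf ⟨k, hwin⟩ fun j hj => ?_)
  by_contra! hjk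
  exact not_copWinRC_of_forall_add_two_le_dist_map σ (fun v => (hσ v).trans' (by omega)) hj

end Game

section Cycle

open Fin.CommRing

variable {n : ℕ}

theorem SimpleGraph.cycleGraph_adj_add_right {u v t : Fin (n + 2)} :
    (cycleGraph (n + 2)).Adj (u + t) (v + t) ↔ (cycleGraph (n + 2)).Adj u v := by
  simp only [cycleGraph_adj, add_sub_add_right_eq_sub]

theorem SimpleGraph.cycleGraph_adj_add_one (u : Fin (n + 2)) :
    (cycleGraph (n + 2)).Adj u (u + 1) :=
  cycleGraph_adj.mpr (Or.inr (add_sub_cancel_left u 1))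

theorem SimpleGraph.cycleGraph_dist_add_natCast_le (u : Fin (n + 2)) (m : ℕ) :
    (cycleGraph (n + 2)).dist u (u + m) ≤ m := by
  induction m with
  | zero => simp
  | succ m ih =>
    have hadj := cycleGraph_adj_add_one (u + (m : Fin (n + 2)))
    calc (cycleGraph (n + 2)).dist u (u + (m + 1 : ℕ))
        ≤ (cycleGraph (n + 2)).dist u (u + m) +
            (cycleGraph (n + 2)).dist (u + m) (u + m + 1) := by
          rw [Nat.cast_succ, ← add_assoc]; exact cycleGraph_connected.dist_triangle
      _ ≤ m + 1 := by rw [dist_eq_one_iff_adj.mpr hadj]; omega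

theorem SimpleGraph.cycleGraph_dist_le_val_sub (u v : Fin (n + 2)) :
    (cycleGraph (n + 2)).dist u v ≤ (v - u).val := by
  simpa using cycleGraph_dist_add_natCast_le u (v - u).val

theorem SimpleGraph.Walk.exists_intCast_eq_sub_cycleGraph {u v : Fin (n + 2)}
    (p : (cycleGraph (n + 2)).Walk u v) :
    ∃ s : ℤ, s.natAbs ≤ p.length ∧ (s : Fin (n + 2)) = v - u := by
  induction p with
  | nil => exact ⟨0, by simp⟩
  | @cons a b c hadj p ih =>
    obtain ⟨s, hs, hsc⟩ := ih
    rw [length_cons]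
    rcases cycleGraph_adj.mp hadj with hab | hba
    · refine ⟨s - 1, by omega, ?_⟩
      push_cast
      linear_combination hsc + hab
    · refine ⟨s + 1, by omega, ?_⟩
      push_cast
      linear_combination hsc - hba

theorem Fin.min_val_val_neg_le_natAbs_of_intCast_eq {m : ℕ} [NeZero m] {x : Fin m} {s : ℤ}
    (h : (s : Fin m) = x) : min x.val (-x).val ≤ s.natAbs := by
  obtain ⟨k, rfl | rfl⟩ := Int.eq_nat_or_neg s
  · subst h
    simpa using Or.inl (Nat.mod_le k m)
  · rw [← h]
    simpa using Or.inr (Nat.mod_le k m)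

theorem SimpleGraph.cycleGraph_dist (u v : Fin (n + 2)) :
    (cycleGraph (n + 2)).dist u v = min (v - u).val (u - v).val := by
  refine le_antisymm (le_min (cycleGraph_dist_le_val_sub u v) ?_) ?_
  · rw [dist_comm]
    exact cycleGraph_dist_le_val_sub v u
  obtain ⟨p, hp⟩ := cycleGraph_connected.exists_walk_length_eq_dist u v
  obtain ⟨s, hs, hsv⟩ := p.exists_intCast_eq_sub_cycleGraph
  have := Fin.min_val_val_neg_le_natAbs_of_intCast_eq hsv
  rw [neg_sub] at this
  exact (this.trans hs).trans hp.le

theorem SimpleGraph.cycleGraph_dist_le_half (u v : Fin (n + 2)) :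
    (cycleGraph (n + 2)).dist u v ≤ (n + 2) / 2 := by
  rw [cycleGraph_dist, ← neg_sub, Fin.val_neg]
  split_ifs <;> omega

theorem SimpleGraph.cycleGraph_dist_add_half {h : ℕ} (hh : h + h = n + 2) (u : Fin (n + 2)) :
    (cycleGraph (n + 2)).dist u (u + h) = h := by
  have hneg : -(h : Fin (n + 2)) = h := by
    rw [neg_eq_iff_add_eq_zero, ← Nat.cast_add, hh, Fin.natCast_self]
  rw [cycleGraph_dist, add_sub_cancel_left, sub_add_cancel_left, hneg, min_self, Fin.val_natCast,
    Nat.mod_eq_of_lt (by omega)]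

theorem SimpleGraph.cycleGraph_exists_hom_dist_map_eq {h : ℕ} (hh : h + h = n + 2) :
    ∃ σ : cycleGraph (n + 2) →g cycleGraph (n + 2), ∀ v, (cycleGraph (n + 2)).dist v (σ v) = h :=
  ⟨⟨(· + h), cycleGraph_adj_add_right.mpr⟩, cycleGraph_dist_add_half hh⟩

end Cycle

/-- For any even cycle `C_n` (`n ≥ 4` even), `rc(C_n) = n/2 - 1`. -/
theorem rcNum_cycleGraph_even (n : ℕ) (hn : 4 ≤ n) (heven : Even n) :
    rcNum (cycleGraph n) = n / 2 - 1 := by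
  obtain ⟨h, rfl⟩ := heven
  obtain ⟨m, hm⟩ : ∃ m, h + h = m + 2 := ⟨h + h - 2, by omega⟩
  rw [hm]
  obtain ⟨σ, hσ⟩ := cycleGraph_exists_hom_dist_map_eq hm
  refine rcNum_eq_of_forall_dist_le_of_forall_le_dist_map 0 σ (fun v => ?_) (fun v => ?_)
  · have := cycleGraph_dist_le_half 0 v
    omega
  · rw [hσ]
    omega
end

section
/- For any cycle C_n with n ≥ 4, rc(C_n) = ⌊n/2⌋ − 1. -/
open SimpleGraph

/-!
On `C_n` every vertex lies within `⌊n/2⌋` of the cop's starting vertex, so a single first step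
towards the robber's initial position brings the cop within `⌊n/2⌋ - 1`. Conversely, the robber
starts antipodally to the cop and answers every move by the same move rotated by `⌊n/2⌋`. The
rotation is a graph homomorphism, so the robber moves legally, and the cop stays at distance
`⌊n/2⌋` before, and at least `⌊n/2⌋ - 1` after, each of his moves.

Distances in `C_n` are read off as `min(d, n - d)` for the difference `d` of the endpoints in
`Fin n`; the lower bound holds because this quantity changes by at most one along an edge.
-/

namespace Fin

variable {n : ℕ}

def cycleNorm (x : Fin n) : ℕ :=
  min x.val (n - x.val)

@[simp]
theorem cycleNorm_zero [NeZero n] : cycleNorm (0 : Fin n) = 0 := by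
  simp [cycleNorm]

theorem cycleNorm_le_half (x : Fin n) : cycleNorm x ≤ n / 2 := by
  unfold cycleNorm
  omega

theorem cycleNorm_neg [NeZero n] (x : Fin n) : cycleNorm (-x) = cycleNorm x := by
  unfold cycleNorm
  rw [Fin.val_neg]
  split_ifs with hx
  · simp [hx]
  · have := x.isLt
    omega

theorem cycleNorm_add_one_le (x : Fin (n + 1)) : cycleNorm (x + 1) ≤ cycleNorm x + 1 := by
  unfold cycleNorm
  rw [Fin.val_add_one]
  split_ifs with hx
  · simp [hx]
  · have := Fin.val_lt_last hx
    omega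

theorem cycleNorm_le_cycleNorm_add_one (x : Fin (n + 1)) :
    cycleNorm x ≤ cycleNorm (x + 1) + 1 := by
  have := cycleNorm_add_one_le (-(x + 1))
  rwa [show -(x + 1) + 1 = -x by abel, cycleNorm_neg, cycleNorm_neg] at this

end Fin

namespace SimpleGraph

variable {V : Type*} {G : SimpleGraph V}

theorem Walk.le_add_length_of_forall_adj {f : V → ℕ}
    (hf : ∀ ⦃u v⦄, G.Adj u v → f v ≤ f u + 1) {u v : V} (p : G.Walk u v) :
    f v ≤ f u + p.length := by
  induction p with
  | nil => simp
  | cons hadj _ ih =>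
    rw [Walk.length_cons]
    have := hf hadj
    omega

theorem rcNum_eq_of_copWinRC {k : ℕ} (hk : CopWinRC G k) (hlt : ∀ j < k, ¬ CopWinRC G j) :
    rcNum G = k :=
  le_antisymm (Nat.sInf_le hk) (le_csInf ⟨k, hk⟩ fun j hj => not_lt.1 fun h => hlt j h hj)

theorem exists_eq_or_adj_dist_le_dist_sub_one (v x : V) :
    ∃ w, (w = v ∨ G.Adj v w) ∧ G.dist w x ≤ G.dist v x - 1 := by
  by_cases hvx : G.Reachable v x
  · obtain ⟨p, hp⟩ := hvx.exists_walk_length_eq_dist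
    cases p with
    | nil => exact ⟨v, Or.inl rfl, by simp⟩
    | cons hadj q =>
      refine ⟨_, Or.inr hadj, ?_⟩
      have := dist_le q
      rw [Walk.length_cons] at hp
      omega
  · exact ⟨v, Or.inl rfl, by simp [dist_eq_zero_of_not_reachable hvx]⟩

theorem copWinRC_of_forall_dist_le {k : ℕ} (v : V) (hv : ∀ w, G.dist v w ≤ k + 1) :
    CopWinRC G k := by
  choose step hstep using fun x => G.exists_eq_or_adj_dist_le_dist_sub_one v x
  refine ⟨v, fun _ h => step (h 0), fun r _ => ⟨fun t => ?_, 0, Or.inr ?_⟩⟩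
  · cases t with
    | zero => exact (hstep (r 0)).1
    | succ t => exact Or.inl rfl
  · have h1 := (hstep (r 0)).2
    have h2 := hv (r 0)
    show G.dist (step (r 0)) (r 0) ≤ k
    omega

open Classical in
/-- The robber who answers each legal move of the cop by the image of that move under `φ`. -/
noncomputable def shadowRobber (φ : G →g G) (c₀ : V) (F : (n : ℕ) → (Fin (n + 1) → V) → V) :
    ℕ → V
  | 0 => φ c₀
  | m + 1 =>
    let target := φ (F m fun i => shadowRobber φ c₀ F i)
    if G.Adj (shadowRobber φ c₀ F m) target then target else shadowRobber φ c₀ F m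
decreasing_by all_goals first | exact i.isLt | omega

section shadowRobber

variable {φ : G →g G} {c₀ : V} {F : (n : ℕ) → (Fin (n + 1) → V) → V}

theorem shadowRobber_legal (m : ℕ) :
    shadowRobber φ c₀ F (m + 1) = shadowRobber φ c₀ F m ∨
      G.Adj (shadowRobber φ c₀ F m) (shadowRobber φ c₀ F (m + 1)) := by
  rw [shadowRobber.eq_2]
  split_ifs with h
  · exact Or.inr h
  · exact Or.inl rfl

theorem shadowRobber_eq_map_copSeq
    (hcop : ∀ m, copSeq c₀ F (shadowRobber φ c₀ F) (m + 1) = copSeq c₀ F (shadowRobber φ c₀ F) m ∨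
      G.Adj (copSeq c₀ F (shadowRobber φ c₀ F) m) (copSeq c₀ F (shadowRobber φ c₀ F) (m + 1)))
    (m : ℕ) : shadowRobber φ c₀ F m = φ (copSeq c₀ F (shadowRobber φ c₀ F) m) := by
  induction m with
  | zero => rw [shadowRobber.eq_1]; rfl
  | succ m ih =>
    rw [shadowRobber.eq_2, ← copSeq.eq_2 c₀ F]
    rcases hcop m with hstay | hmove
    · rw [hstay, ← ih, ite_self]
    · rw [if_pos (ih ▸ φ.map_adj hmove)]

end shadowRobber

theorem not_copWinRC_of_forall_add_two_le_dist {k : ℕ} (φ : G →g G)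
    (hφ : ∀ x, k + 2 ≤ G.dist x (φ x)) : ¬ CopWinRC G k := by
  rintro ⟨c₀, F, hwin⟩
  obtain ⟨hcop, t, hcap⟩ := hwin _ shadowRobber_legal
  have hr := shadowRobber_eq_map_copSeq hcop t
  set c := copSeq c₀ F (shadowRobber φ c₀ F)
  rw [hr] at hcap
  have hfar := hφ (c t)
  rcases hcop t with hstay | hmove
  · rw [hstay] at hcap
    omega
  · have := hmove.reachable.dist_triangle_left (φ (c t))
    rw [dist_eq_one_iff_adj.2 hmove] at this
    omega

section cycleGraph

open scoped Fin.NatCast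

variable {n : ℕ}

@[simps]
def cycleGraphAddRight (d : Fin (n + 2)) : cycleGraph (n + 2) →g cycleGraph (n + 2) where
  toFun x := x + d
  map_rel' := by
    intro u v h
    simpa only [cycleGraph_adj, add_sub_add_right_eq_sub] using h

theorem cycleGraph_dist_add_natCast_le_s11 (u : Fin (n + 2)) (m : ℕ) :
    (cycleGraph (n + 2)).dist u (u + (m : Fin (n + 2))) ≤ m := by
  induction m with
  | zero => simp
  | succ m ih =>
    have hadj : (cycleGraph (n + 2)).Adj (u + (m : Fin (n + 2)))
        (u + ((m + 1 : ℕ) : Fin (n + 2))) := by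
      rw [cycleGraph_adj]
      right
      push_cast
      abel
    calc (cycleGraph (n + 2)).dist u (u + ((m + 1 : ℕ) : Fin (n + 2)))
        ≤ (cycleGraph (n + 2)).dist u (u + (m : Fin (n + 2))) +
          (cycleGraph (n + 2)).dist (u + (m : Fin (n + 2))) (u + ((m + 1 : ℕ) : Fin (n + 2))) :=
          cycleGraph_connected.dist_triangle
      _ ≤ m + 1 := by rw [dist_eq_one_iff_adj.2 hadj]; omega

theorem cycleGraph_dist_le_val_sub_s11 (u v : Fin (n + 2)) :
    (cycleGraph (n + 2)).dist u v ≤ (v - u).val := by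
  simpa using cycleGraph_dist_add_natCast_le_s11 u (v - u).val

theorem cycleNorm_sub_le_of_adj (a : Fin (n + 2)) {u v : Fin (n + 2)}
    (h : (cycleGraph (n + 2)).Adj u v) : (v - a).cycleNorm ≤ (u - a).cycleNorm + 1 := by
  rcases cycleGraph_adj.1 h with h | h
  · rw [show u - a = v - a + 1 by rw [← h]; abel]
    exact Fin.cycleNorm_le_cycleNorm_add_one _
  · rw [show v - a = u - a + 1 by rw [← h]; abel]
    exact Fin.cycleNorm_add_one_le _

theorem cycleGraph_dist_s11 (u v : Fin (n + 2)) :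
    (cycleGraph (n + 2)).dist u v = (v - u).cycleNorm := by
  apply le_antisymm
  · have h₁ := cycleGraph_dist_le_val_sub_s11 u v
    have h₂ := cycleGraph_dist_le_val_sub_s11 v u
    rw [dist_comm, ← neg_sub, Fin.val_neg] at h₂
    unfold Fin.cycleNorm
    split_ifs at h₂ with h
    · simp_all
    · omega
  · obtain ⟨p, hp⟩ := cycleGraph_connected.exists_walk_length_eq_dist u v
    simpa [hp] using p.le_add_length_of_forall_adj fun _ _ => cycleNorm_sub_le_of_adj u

theorem cycleGraph_dist_le_half_s11 (u v : Fin (n + 2)) :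
    (cycleGraph (n + 2)).dist u v ≤ (n + 2) / 2 :=
  cycleGraph_dist_s11 u v ▸ Fin.cycleNorm_le_half _

theorem cycleGraph_dist_add_half_s11 (x : Fin (n + 2)) :
    (cycleGraph (n + 2)).dist x (x + ((n + 2) / 2 : ℕ)) = (n + 2) / 2 := by
  rw [cycleGraph_dist_s11, add_sub_cancel_left, Fin.cycleNorm, Fin.val_natCast,
    Nat.mod_eq_of_lt (by omega)]
  omega

theorem copWinRC_cycleGraph : CopWinRC (cycleGraph (n + 2)) ((n + 2) / 2 - 1) :=
  copWinRC_of_forall_dist_le 0 fun w => (cycleGraph_dist_le_half_s11 0 w).trans (by omega)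

theorem not_copWinRC_cycleGraph {k : ℕ} (hk : k + 2 ≤ (n + 2) / 2) :
    ¬ CopWinRC (cycleGraph (n + 2)) k :=
  not_copWinRC_of_forall_add_two_le_dist (cycleGraphAddRight ((n + 2) / 2 : ℕ)) fun x => by
    rwa [cycleGraphAddRight_apply, cycleGraph_dist_add_half_s11]

end cycleGraph

end SimpleGraph

/-- For any cycle `C_n` with `n ≥ 4`, `rc(C_n) = ⌊n/2⌋ - 1`. -/
theorem rcNum_cycleGraph (n : ℕ) (hn : 4 ≤ n) :
    rcNum (cycleGraph n) = n / 2 - 1 := by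
  obtain ⟨m, rfl⟩ : ∃ m, n = m + 2 := ⟨n - 2, by omega⟩
  exact rcNum_eq_of_copWinRC copWinRC_cycleGraph fun k hk =>
    not_copWinRC_cycleGraph (by omega)
end

section
/- For connected graphs G and H, rc(G □ H) ≤ min{rad(G) + rc(H), rad(H) + rc(G)}, where □ denotes the Cartesian product. -/
open SimpleGraph

/-!
The cop stands still at a center `u` of `G` in the first coordinate and, in the second, plays a
winning strategy for `H` against the robber's shadow, i.e. his projection to `H`. When that strategy
brings the shadow within distance `k`, the real distance is at most `ecc u + k = rad G + k`, because
distances in `G □ H` are sums of distances in the factors. The other bound is symmetric.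
-/

namespace SimpleGraph

variable {V W : Type*} {G : SimpleGraph V} {H : SimpleGraph W}

lemma dist_boxProd_le (x y : V × W) :
    (G □ H).dist x y ≤ G.dist x.1 y.1 + H.dist x.2 y.2 := by
  rw [dist, dist, dist, edist_boxProd]
  rcases eq_or_ne (G.edist x.1 y.1) ⊤ with hG | hG
  · simp [hG]
  rcases eq_or_ne (H.edist x.2 y.2) ⊤ with hH | hH
  · simp [hH]
  · rw [ENat.toNat_add hG hH]

end SimpleGraph

section Radius

variable {V : Type*} (G : SimpleGraph V)

lemma dist_le_graphEcc [Finite V] (u v : V) : G.dist u v ≤ graphEcc G u :=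
  le_csSup (Set.finite_range _).bddAbove ⟨v, rfl⟩

lemma exists_graphEcc_eq_graphRad [Nonempty V] : ∃ u, graphEcc G u = graphRad G :=
  Nat.sInf_mem (Set.range_nonempty _)

lemma copWinRC_graphEcc [Finite V] (v : V) : CopWinRC G (graphEcc G v) :=
  ⟨v, fun _ _ => v, fun r _ =>
    ⟨fun n => by cases n <;> exact Or.inl rfl, 0, Or.inl (dist_le_graphEcc G v (r 0))⟩⟩

lemma copWinRC_rcNum [Finite V] [Nonempty V] : CopWinRC G (rcNum G) :=
  Nat.sInf_mem (s := {k | CopWinRC G k}) ⟨_, copWinRC_graphEcc G (Classical.arbitrary V)⟩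

end Radius

section Shadow

variable {V V' : Type*} {G : SimpleGraph V} {G' : SimpleGraph V'}

lemma copSeq_comp (σ : V → V') (π : V' → V) (c₀ : V) (F : (n : ℕ) → (Fin (n + 1) → V) → V)
    (r : ℕ → V') (n : ℕ) :
    copSeq (σ c₀) (fun n rs => σ (F n (π ∘ rs))) r n = σ (copSeq c₀ F (π ∘ r) n) := by
  cases n <;> rfl

theorem CopWinRC.of_shadow (π : V' → V) (σ : G →g G')
    (hπ : ∀ {x y}, G'.Adj x y → π x = π y ∨ G.Adj (π x) (π y))
    {c k : ℕ} (hdist : ∀ x y, G'.dist (σ x) y ≤ c + G.dist x (π y))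
    (hk : CopWinRC G k) : CopWinRC G' (c + k) := by
  obtain ⟨c₀, F, hF⟩ := hk
  refine ⟨σ c₀, fun n rs => σ (F n (π ∘ rs)), fun r hr => ?_⟩
  have hshadow : ∀ i, (π ∘ r) (i + 1) = (π ∘ r) i ∨ G.Adj ((π ∘ r) i) ((π ∘ r) (i + 1)) := by
    intro i
    rcases hr i with h | h
    · exact Or.inl (congrArg π h)
    · exact (hπ h).imp Eq.symm id
  obtain ⟨hmoves, n, hcapture⟩ := hF (π ∘ r) hshadow
  simp only [copSeq_comp]
  exact ⟨fun m => (hmoves m).imp (congrArg σ) σ.map_adj, n,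
    hcapture.imp (fun h => (hdist _ _).trans (Nat.add_le_add_left h c))
      (fun h => (hdist _ _).trans (Nat.add_le_add_left h c))⟩

end Shadow

section BoxProd

variable {V W : Type*} (G : SimpleGraph V) (H : SimpleGraph W)

lemma copWinRC_boxProd_of_right [Finite V] [Nonempty V] {k : ℕ} (hk : CopWinRC H k) :
    CopWinRC (G □ H) (graphRad G + k) := by
  obtain ⟨u, hu⟩ := exists_graphEcc_eq_graphRad G
  refine hk.of_shadow Prod.snd (G.boxProdRight H u).toHom ?_ fun b y => ?_
  · intro x y hxy
    rcases SimpleGraph.boxProd_adj.mp hxy with ⟨_, h⟩ | ⟨h, _⟩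
    · exact Or.inl h
    · exact Or.inr h
  · have hecc := dist_le_graphEcc G u y.1
    have hsum := SimpleGraph.dist_boxProd_le (G := G) (H := H) (u, b) y
    simp only [RelEmbedding.coe_toRelHom, boxProdRight_apply] at hsum ⊢
    omega

lemma copWinRC_boxProd_of_left [Finite W] [Nonempty W] {k : ℕ} (hk : CopWinRC G k) :
    CopWinRC (G □ H) (graphRad H + k) := by
  obtain ⟨u, hu⟩ := exists_graphEcc_eq_graphRad H
  refine hk.of_shadow Prod.fst (G.boxProdLeft H u).toHom ?_ fun a y => ?_
  · intro x y hxy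
    rcases SimpleGraph.boxProd_adj.mp hxy with ⟨h, _⟩ | ⟨_, h⟩
    · exact Or.inr h
    · exact Or.inl h
  · have hecc := dist_le_graphEcc H u y.2
    have hsum := SimpleGraph.dist_boxProd_le (G := G) (H := H) (a, u) y
    simp only [RelEmbedding.coe_toRelHom, boxProdLeft_apply] at hsum ⊢
    omega

end BoxProd

/-- For connected graphs `G` and `H`,
`rc(G □ H) ≤ min (rad(G) + rc(H)) (rad(H) + rc(G))`. -/
theorem rcNum_boxProd_le {V W : Type*} [Fintype V] [Fintype W]
    (G : SimpleGraph V) (H : SimpleGraph W)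
    (hG : G.Connected) (hH : H.Connected) :
    rcNum (G □ H) ≤ min (graphRad G + rcNum H) (graphRad H + rcNum G) := by
  have := hG.nonempty
  have := hH.nonempty
  exact le_min (Nat.sInf_le (copWinRC_boxProd_of_right G H (copWinRC_rcNum H)))
    (Nat.sInf_le (copWinRC_boxProd_of_left G H (copWinRC_rcNum G)))
end
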